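/- arXiv:1705.03600 — 2 statements merged into one kernel-verified Lean document; each statement's English description precedes it below -/
import Mathlib

section
/- Let a, b ∈ ℂ∖{0,1}. The one-dimensional subalgebras ℂ·diag(1, a−1, −a) and ℂ·diag(1, b−1, −b) of sl(3,ℂ) are SL(3,ℂ)-conjugate if and only if b ∈ {a, 1/a, 1−a, 1/(1−a), a/(a−1), (a−1)/a}. (Here diag(1, a−1, −a) = H_α + a H_β.) -/
open Matrix

noncomputable section

abbrev M3 : Type := Matrix (Fin 3) (Fin 3) ℂ

/-- The elementary matrix `E i j`. -/
def Eij (i j : Fin 3) : M3 := Matrix.single i j 1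

/-- `sl(3,ℂ)`, the set of traceless 3×3 complex matrices. -/
def sl3 : Set M3 := {X | Matrix.trace X = 0}

/-- `SL(3,ℂ) = {M : det M = 1}`. -/
def SL3 : Set M3 := {M | M.det = 1}

/-- Two subsets of `sl(3,ℂ)` are `SL(3,ℂ)`-conjugate if `M 𝔞 M⁻¹ = 𝔟` for some `M ∈ SL3`. -/
def SLConj (a b : Set M3) : Prop :=
  ∃ M ∈ SL3, (fun X => M * X * M⁻¹) '' a = b

/-- Conjugation by `M` as a linear map. -/
def conjLin (M : M3) : M3 →ₗ[ℂ] M3 where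
  toFun X := M * X * M⁻¹
  map_add' X Y := by simp [Matrix.add_mul, Matrix.mul_add]
  map_smul' c X := by simp [smul_mul_assoc, mul_smul_comm]

lemma image_span (M v : M3) :
    (fun X => M * X * M⁻¹) '' (Submodule.span ℂ {v} : Set M3)
      = (Submodule.span ℂ {M * v * M⁻¹} : Set M3) := by
  have h := Submodule.map_span (conjLin M) {v}
  rw [Set.image_singleton] at h
  have h2 : ((Submodule.map (conjLin M) (Submodule.span ℂ {v}) : Submodule ℂ M3) : Set M3)
      = (Submodule.span ℂ {M * v * M⁻¹} : Set M3) := by rw [h]; rfl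
  rw [← h2, Submodule.map_coe]
  rfl

lemma conj_of (u v M N : M3) (hdet : M.det = 1) (hMN : M * N = 1) (c : ℂ) (hc : c ≠ 0)
    (h : M * u * N = c • v) :
    SLConj (Submodule.span ℂ {u} : Set M3) (Submodule.span ℂ {v} : Set M3) := by
  have hN : M⁻¹ = N := Matrix.inv_eq_right_inv hMN
  refine ⟨M, hdet, ?_⟩
  rw [image_span, hN, h]
  exact congrArg _ (Submodule.span_singleton_smul_eq (IsUnit.mk0 c hc) v)

lemma st11_conj_mul (M X Y : M3) (hinv : M⁻¹ * M = 1) :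
    (M * X * M⁻¹) * (M * Y * M⁻¹) = M * (X * Y) * M⁻¹ := by
  calc (M * X * M⁻¹) * (M * Y * M⁻¹) = M * (X * (M⁻¹ * M) * Y) * M⁻¹ := by
        simp only [Matrix.mul_assoc]
    _ = M * (X * Y) * M⁻¹ := by rw [hinv, Matrix.mul_one]

lemma st11_trace_conj (M Z : M3) (hinv : M⁻¹ * M = 1) :
    Matrix.trace (M * Z * M⁻¹) = Matrix.trace Z := by
  rw [Matrix.trace_mul_cycle, hinv, Matrix.one_mul]

lemma trace_dd (x y z : ℂ) :
    Matrix.trace ((Matrix.diagonal ![x, y, z] : M3) * Matrix.diagonal ![x, y, z])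
      = x * x + y * y + z * z := by
  simp [Matrix.diagonal_mul_diagonal, Matrix.trace_diagonal, Fin.sum_univ_three, add_assoc]

lemma trace_ddd (x y z : ℂ) :
    Matrix.trace ((Matrix.diagonal ![x, y, z] : M3) * Matrix.diagonal ![x, y, z]
        * Matrix.diagonal ![x, y, z]) = x * x * x + y * y * y + z * z * z := by
  simp [Matrix.diagonal_mul_diagonal, Matrix.trace_diagonal, Fin.sum_univ_three, add_assoc]

set_option maxHeartbeats 1000000 in
theorem stmt_11 (a b : ℂ) (ha0 : a ≠ 0) (ha1 : a ≠ 1) (hb0 : b ≠ 0) (hb1 : b ≠ 1) :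
    SLConj (Submodule.span ℂ {(Matrix.diagonal ![1, a - 1, -a] : M3)} : Set M3)
        (Submodule.span ℂ {(Matrix.diagonal ![1, b - 1, -b] : M3)} : Set M3) ↔
      b ∈ ({a, a⁻¹, 1 - a, (1 - a)⁻¹, a / (a - 1), (a - 1) / a} : Set ℂ) := by
  have ha1' : a - 1 ≠ 0 := sub_ne_zero.mpr ha1
  have ha1'' : (1 : ℂ) - a ≠ 0 := sub_ne_zero.mpr (Ne.symm ha1)
  let Da : M3 := Matrix.diagonal ![1, a - 1, -a]
  let Db : M3 := Matrix.diagonal ![1, b - 1, -b]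
  show SLConj (Submodule.span ℂ {Da} : Set M3) (Submodule.span ℂ {Db} : Set M3) ↔ _
  constructor
  · rintro ⟨M, hdet, himg⟩
    have hu : IsUnit M.det := by rw [hdet]; exact isUnit_one
    have hinv : M⁻¹ * M = 1 := Matrix.nonsing_inv_mul M hu
    rw [image_span] at himg
    have hspan : Submodule.span ℂ {M * Da * M⁻¹} = Submodule.span ℂ {Db} :=
      SetLike.coe_injective himg
    have hmem : M * Da * M⁻¹ ∈ Submodule.span ℂ {Db} := by
      rw [← hspan]; exact Submodule.mem_span_singleton_self _
    obtain ⟨c, hc⟩ := Submodule.mem_span_singleton.mp hmem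
    -- trace of squares
    have T2 : Matrix.trace (Da * Da) = Matrix.trace ((c • Db) * (c • Db)) := by
      rw [hc, st11_conj_mul M Da Da hinv, st11_trace_conj M _ hinv]
    have T3 : Matrix.trace (Da * Da * Da) = Matrix.trace ((c • Db) * (c • Db) * (c • Db)) := by
      rw [hc, st11_conj_mul M Da Da hinv, st11_conj_mul M _ Da hinv, st11_trace_conj M _ hinv]
    simp only [smul_mul_assoc, mul_smul_comm, smul_smul, Matrix.trace_smul,
      smul_eq_mul, Da, Db, trace_dd, trace_ddd] at T2 T3
    -- T2 : 1*1 + (a-1)*(a-1) + -a * -a = c*c * (...)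
    have e2 : a ^ 2 - a + 1 = c ^ 2 * (b ^ 2 - b + 1) := by linear_combination T2 / 2
    have e3 : a ^ 2 - a = c ^ 3 * (b ^ 2 - b) := by linear_combination (-1/3 : ℂ) * T3
    have key : (b - a) * (a * b - 1) * (a + b - 1) * ((1 - a) * b - 1) * ((a - 1) * b - a)
        * (a * b - a + 1) = 0 := by
      linear_combination (-((a ^ 2 - a) + c ^ 3 * (b ^ 2 - b)) * (b ^ 2 - b + 1) ^ 3) * e3
        + (((a ^ 2 - a + 1) ^ 2 + (a ^ 2 - a + 1) * c ^ 2 * (b ^ 2 - b + 1)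
            + c ^ 4 * (b ^ 2 - b + 1) ^ 2) * (b ^ 2 - b) ^ 2) * e2
    simp only [Set.mem_insert_iff, Set.mem_singleton_iff]
    rcases mul_eq_zero.mp key with h | h
    · rcases mul_eq_zero.mp h with h | h
      · rcases mul_eq_zero.mp h with h | h
        · rcases mul_eq_zero.mp h with h | h
          · rcases mul_eq_zero.mp h with h | h
            · left; linear_combination h
            · right; left; field_simp; linear_combination h
          · right; right; left; linear_combination h
        · right; right; right; left; field_simp; linear_combination h
      · right; right; right; right; left; field_simp; linear_combination h
    · right; right; right; right; right; field_simp; linear_combination h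
  · intro hmem
    simp only [Set.mem_insert_iff, Set.mem_singleton_iff] at hmem
    rcases hmem with h | h | h | h | h | h
    · subst h
      exact conj_of _ _ 1 1 (by simp) (by simp) 1 one_ne_zero (by simp [Da, Db])
    · -- b = a⁻¹, swap (0 2)
      subst h
      refine conj_of _ _ !![0,0,-1; 0,-1,0; -1,0,0] !![0,0,-1; 0,-1,0; -1,0,0]
        ?_ ?_ (-a) (neg_ne_zero.mpr ha0) ?_
      · simp [Matrix.det_fin_three]
      · ext i j; fin_cases i <;> fin_cases j <;>
          simp [Matrix.mul_apply, Fin.sum_univ_three, Matrix.vecHead, Matrix.vecTail]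
      · ext i j; fin_cases i <;> fin_cases j <;>
          simp [Da, Db, Matrix.mul_apply, Fin.sum_univ_three, Matrix.diagonal, Matrix.vecHead,
            Matrix.vecTail] <;> (try field_simp) <;> (try ring)
    · -- b = 1 - a, swap (1 2)
      subst h
      refine conj_of _ _ !![-1,0,0; 0,0,-1; 0,-1,0] !![-1,0,0; 0,0,-1; 0,-1,0]
        ?_ ?_ 1 one_ne_zero ?_
      · simp [Matrix.det_fin_three]
      · ext i j; fin_cases i <;> fin_cases j <;>
          simp [Matrix.mul_apply, Fin.sum_univ_three, Matrix.vecHead, Matrix.vecTail]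
      · ext i j; fin_cases i <;> fin_cases j <;>
          simp [Da, Db, Matrix.mul_apply, Fin.sum_univ_three, Matrix.diagonal, Matrix.vecHead,
            Matrix.vecTail] <;> (try field_simp) <;> (try ring)
    · -- b = (1 - a)⁻¹, 3-cycle C
      subst h
      refine conj_of _ _ !![0,1,0; 0,0,1; 1,0,0] !![0,0,1; 1,0,0; 0,1,0]
        ?_ ?_ (a - 1) ha1' ?_
      · simp [Matrix.det_fin_three]
      · ext i j; fin_cases i <;> fin_cases j <;>
          simp [Matrix.mul_apply, Fin.sum_univ_three, Matrix.vecHead, Matrix.vecTail]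
      · ext i j; fin_cases i <;> fin_cases j <;>
          simp [Da, Db, Matrix.mul_apply, Fin.sum_univ_three, Matrix.diagonal, Matrix.vecHead,
            Matrix.vecTail] <;> (try field_simp) <;> (try ring)
    · -- b = a / (a - 1), swap (0 1)
      subst h
      refine conj_of _ _ !![0,-1,0; -1,0,0; 0,0,-1] !![0,-1,0; -1,0,0; 0,0,-1]
        ?_ ?_ (a - 1) ha1' ?_
      · simp [Matrix.det_fin_three]
      · ext i j; fin_cases i <;> fin_cases j <;>
          simp [Matrix.mul_apply, Fin.sum_univ_three, Matrix.vecHead, Matrix.vecTail]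
      · ext i j; fin_cases i <;> fin_cases j <;>
          simp [Da, Db, Matrix.mul_apply, Fin.sum_univ_three, Matrix.diagonal, Matrix.vecHead,
            Matrix.vecTail] <;> (try field_simp) <;> (try ring)
    · -- b = (a - 1) / a, 3-cycle Cᵀ
      subst h
      refine conj_of _ _ !![0,0,1; 1,0,0; 0,1,0] !![0,1,0; 0,0,1; 1,0,0]
        ?_ ?_ (-a) (neg_ne_zero.mpr ha0) ?_
      · simp [Matrix.det_fin_three]
      · ext i j; fin_cases i <;> fin_cases j <;>
          simp [Matrix.mul_apply, Fin.sum_univ_three, Matrix.vecHead, Matrix.vecTail]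
      · ext i j; fin_cases i <;> fin_cases j <;>
          simp [Da, Db, Matrix.mul_apply, Fin.sum_univ_three, Matrix.diagonal, Matrix.vecHead,
            Matrix.vecTail] <;> (try field_simp) <;> (try ring)
end
end

section
/- For every a ∈ ℂ with a ≠ ±1, the subspace 𝔤_a = span{E₁₂, E₂₃, E₁₃, diag(a, 1−a, −1)} of sl(3,ℂ) is a 4-dimensional solvable Lie subalgebra (here diag(a, 1−a, −1) = a H_α + H_β), and for a, b ∈ ℂ∖{1,−1} the subalgebras 𝔤_a and 𝔤_b are SL(3,ℂ)-conjugate if and only if a = b. -/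
open Matrix

noncomputable section

attribute [local instance 100] LieRing.ofAssociativeRing

/-- `𝔤_a = span{E₁₂, E₂₃, E₁₃, a H_α + H_β}` where `a H_α + H_β = diag(a, 1−a, −1)`. -/
def Gset (a : ℂ) : Set M3 := {Eij 0 1, Eij 1 2, Eij 0 2, (Matrix.diagonal ![a, 1 - a, -1] : M3)}

/- ### Auxiliary material -/

/-- Explicit description of `span (Gset b)` as a submodule cut out by linear equations. -/
def W (b : ℂ) : Submodule ℂ M3 where
  carrier := {X | X 1 0 = 0 ∧ X 2 0 = 0 ∧ X 2 1 = 0 ∧ X 0 0 = -b * X 2 2 ∧ X 1 1 = -(1-b) * X 2 2}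
  add_mem' := by
    rintro x y ⟨h1,h2,h3,h4,h5⟩ ⟨g1,g2,g3,g4,g5⟩
    refine ⟨?_,?_,?_,?_,?_⟩ <;> simp [Matrix.add_apply, h1,h2,h3,h4,h5,g1,g2,g3,g4,g5] <;> ring
  zero_mem' := by refine ⟨?_,?_,?_,?_,?_⟩ <;> simp
  smul_mem' := by
    rintro c x ⟨h1,h2,h3,h4,h5⟩
    refine ⟨?_,?_,?_,?_,?_⟩ <;> simp [Matrix.smul_apply, h1,h2,h3,h4,h5] <;> ring

lemma span_Gset_eq (b : ℂ) : Submodule.span ℂ (Gset b) = W b := by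
  apply le_antisymm
  · rw [Submodule.span_le]
    rintro X (rfl | rfl | rfl | rfl) <;>
      refine ⟨?_,?_,?_,?_,?_⟩ <;>
        simp [Eij, Matrix.single, Matrix.diagonal]
  · rintro X ⟨h1,h2,h3,h4,h5⟩
    have hX : X = X 0 1 • Eij 0 1 + X 1 2 • Eij 1 2 + X 0 2 • Eij 0 2
        + (-(X 2 2)) • (Matrix.diagonal ![b, 1 - b, -1] : M3) := by
      ext i j
      fin_cases i <;> fin_cases j <;>
        simp [Eij, Matrix.single, Matrix.diagonal, h1,h2,h3,h4,h5] <;> ring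
    rw [hX]
    refine Submodule.add_mem _ (Submodule.add_mem _ (Submodule.add_mem _ ?_ ?_) ?_) ?_ <;>
      exact Submodule.smul_mem _ _ (Submodule.subset_span (by simp [Gset]))

lemma bracket_mem (a : ℂ) {x y : M3} (hx : x ∈ W a) (hy : y ∈ W a) : x*y - y*x ∈ W a := by
  obtain ⟨h1,h2,h3,h4,h5⟩ := hx; obtain ⟨g1,g2,g3,g4,g5⟩ := hy
  refine ⟨?_,?_,?_,?_,?_⟩ <;>
    simp [Matrix.sub_apply, Matrix.mul_apply, Fin.sum_univ_three, h1,h2,h3,h4,h5,g1,g2,g3,g4,g5] <;>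
    ring

lemma diag_bracket_zero (a : ℂ) {x y : M3} (hx : x ∈ W a) (hy : y ∈ W a) :
    (x*y - y*x) 0 0 = 0 ∧ (x*y - y*x) 1 1 = 0 ∧ (x*y - y*x) 2 2 = 0 := by
  obtain ⟨h1,h2,h3,h4,h5⟩ := hx; obtain ⟨g1,g2,g3,g4,g5⟩ := hy
  refine ⟨?_,?_,?_⟩ <;>
    simp [Matrix.sub_apply, Matrix.mul_apply, Fin.sum_univ_three, h1,h2,h3,h4,h5,g1,g2,g3,g4,g5] <;>
    ring

/-- `𝔤_a` as a Lie subalgebra. -/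
def K (a : ℂ) : LieSubalgebra ℂ M3 :=
  { W a with
    lie_mem' := by
      intro x y hx hy
      have := bracket_mem a hx hy
      simpa [Ring.lie_def] using this }

lemma lieSpan_eq (a : ℂ) : LieSubalgebra.lieSpan ℂ M3 (Gset a) = K a := by
  apply le_antisymm
  · rw [LieSubalgebra.lieSpan_le]
    intro x hx
    show x ∈ W a
    rw [← span_Gset_eq]; exact Submodule.subset_span hx
  · intro x hx
    have hx' : x ∈ Submodule.span ℂ (Gset a) := by rw [span_Gset_eq]; exact hx
    exact Submodule.span_le.mpr (fun y hy => LieSubalgebra.subset_lieSpan hy) hx'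

def I1 (a : ℂ) : LieIdeal ℂ (K a) where
  carrier := {x | (x : M3) 2 2 = 0}
  add_mem' := by rintro x y hx hy; simp_all [Set.mem_setOf_eq]
  zero_mem' := by simp
  smul_mem' := by
    rintro c x hx
    have : ((c • x : K a) : M3) = c • (x : M3) := rfl
    simp_all [this, Matrix.smul_apply]
  lie_mem := by
    rintro x m hm
    show ((⁅x, m⁆ : K a) : M3) 2 2 = 0
    rw [LieSubalgebra.coe_bracket, Ring.lie_def]
    exact (diag_bracket_zero a x.2 m.2).2.2

def I2 (a : ℂ) : LieIdeal ℂ (K a) where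
  carrier := {x | (x : M3) 2 2 = 0 ∧ (x : M3) 0 1 = 0 ∧ (x : M3) 1 2 = 0}
  add_mem' := by rintro x y hx hy; simp_all [Set.mem_setOf_eq]
  zero_mem' := by simp
  smul_mem' := by
    rintro c x hx
    have : ((c • x : K a) : M3) = c • (x : M3) := rfl
    simp_all [this, Matrix.smul_apply]
  lie_mem := by
    rintro x m ⟨hm22, hm01, hm12⟩
    obtain ⟨h1,h2,h3,h4,h5⟩ := x.2
    obtain ⟨g1,g2,g3,g4,g5⟩ := m.2
    refine ⟨?_, ?_, ?_⟩ <;>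
      · show ((⁅x, m⁆ : K a) : M3) _ _ = 0
        rw [LieSubalgebra.coe_bracket, Ring.lie_def]
        simp [Matrix.sub_apply, Matrix.mul_apply, Fin.sum_univ_three,
          h1,h2,h3,h4,h5,g1,g2,g3,g4,g5,hm22,hm01,hm12]

instance solvK (a : ℂ) : LieAlgebra.IsSolvable (K a) := by
  refine (LieAlgebra.isSolvable_iff ℂ _).mpr ⟨3, ?_⟩
  have h1 : LieAlgebra.derivedSeries ℂ (K a) 1 ≤ I1 a := by
    rw [LieAlgebra.derivedSeries_def, LieAlgebra.derivedSeriesOfIdeal_succ]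
    rw [LieSubmodule.lie_le_iff]
    intro x _ m _
    show ((⁅x, m⁆ : K a) : M3) 2 2 = 0
    rw [LieSubalgebra.coe_bracket, Ring.lie_def]
    exact (diag_bracket_zero a x.2 m.2).2.2
  have h2 : LieAlgebra.derivedSeries ℂ (K a) 2 ≤ I2 a := by
    have : LieAlgebra.derivedSeries ℂ (K a) 2 ≤ ⁅I1 a, I1 a⁆ := by
      rw [LieAlgebra.derivedSeries_def, LieAlgebra.derivedSeriesOfIdeal_succ]
      exact LieSubmodule.mono_lie h1 h1
    refine this.trans ?_
    rw [LieSubmodule.lie_le_iff]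
    intro x hx m hm
    have hx22 : (x : M3) 2 2 = 0 := hx
    have hm22 : (m : M3) 2 2 = 0 := hm
    obtain ⟨h1',h2',h3',h4',h5'⟩ := x.2
    obtain ⟨g1,g2,g3,g4,g5⟩ := m.2
    refine ⟨?_, ?_, ?_⟩ <;>
      · show ((⁅x, m⁆ : K a) : M3) _ _ = 0
        rw [LieSubalgebra.coe_bracket, Ring.lie_def]
        simp [Matrix.sub_apply, Matrix.mul_apply, Fin.sum_univ_three,
          h1',h2',h3',h4',h5',g1,g2,g3,g4,g5,hx22,hm22]
  rw [eq_bot_iff]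
  have h3 : LieAlgebra.derivedSeries ℂ (K a) 3 ≤ ⁅I2 a, I2 a⁆ := by
    rw [LieAlgebra.derivedSeries_def, LieAlgebra.derivedSeriesOfIdeal_succ]
    exact LieSubmodule.mono_lie h2 h2
  refine h3.trans ?_
  rw [LieSubmodule.lie_le_iff]
  intro x hx m hm
  obtain ⟨hx22, hx01, hx12⟩ := hx
  obtain ⟨hm22, hm01, hm12⟩ := hm
  obtain ⟨h1',h2',h3',h4',h5'⟩ := x.2
  obtain ⟨g1,g2,g3,g4,g5⟩ := m.2
  rw [LieSubmodule.mem_bot]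
  ext1
  rw [LieSubalgebra.coe_bracket, Ring.lie_def]
  have hx00 : (x : M3) 0 0 = 0 := by rw [h4', hx22]; ring
  have hx11 : (x : M3) 1 1 = 0 := by rw [h5', hx22]; ring
  have hm00 : (m : M3) 0 0 = 0 := by rw [g4, hm22]; ring
  have hm11 : (m : M3) 1 1 = 0 := by rw [g5, hm22]; ring
  ext i j
  fin_cases i <;> fin_cases j <;>
    simp [Matrix.sub_apply, Matrix.mul_apply, Fin.sum_univ_three,
      h1',h2',h3',hx00,hx11,hx22,hx01,hx12,g1,g2,g3,hm00,hm11,hm22,hm01,hm12]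

lemma span_sub_sl3 (a : ℂ) : (Submodule.span ℂ (Gset a) : Set M3) ⊆ sl3 := by
  intro X hX
  rw [span_Gset_eq] at hX
  obtain ⟨h1,h2,h3,h4,h5⟩ := hX
  show Matrix.trace X = 0
  simp [Matrix.trace, Fin.sum_univ_three, Matrix.diag]
  linear_combination h4 + h5

lemma gset_range (a : ℂ) :
    Gset a = Set.range ![Eij 0 1, Eij 1 2, Eij 0 2, (Matrix.diagonal ![a,1-a,-1] : M3)] := by
  ext x
  constructor
  · rintro (rfl | rfl | rfl | rfl)
    exacts [⟨0, rfl⟩, ⟨1, rfl⟩, ⟨2, rfl⟩, ⟨3, rfl⟩]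
  · rintro ⟨i, rfl⟩
    fin_cases i <;> simp [Gset]

lemma linind (a : ℂ) :
    LinearIndependent ℂ ![Eij 0 1, Eij 1 2, Eij 0 2, (Matrix.diagonal ![a,1-a,-1] : M3)] := by
  rw [Fintype.linearIndependent_iff]
  intro g h
  rw [Fin.sum_univ_four] at h
  have e01 := congrFun (congrFun h 0) 1
  have e12 := congrFun (congrFun h 1) 2
  have e02 := congrFun (congrFun h 0) 2
  have e22 := congrFun (congrFun h 2) 2
  simp [Eij, Matrix.single, Matrix.diagonal, Matrix.add_apply,
    Matrix.smul_apply] at e01 e12 e02 e22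
  intro i
  fin_cases i <;> simp_all

lemma finrank_span (a : ℂ) : Module.finrank ℂ (Submodule.span ℂ (Gset a)) = 4 := by
  rw [gset_range, finrank_span_eq_card (linind a)]
  simp

lemma tr2W (b : ℂ) {X : M3} (hX : X ∈ W b) :
    Matrix.trace (X*X) = (2*b^2-2*b+2) * (X 2 2)^2 := by
  obtain ⟨h1,h2,h3,h4,h5⟩ := hX
  simp [Matrix.trace, Matrix.diag, Matrix.mul_apply, Fin.sum_univ_three, h1,h2,h3,h4,h5]
  ring

lemma tr3W (b : ℂ) {X : M3} (hX : X ∈ W b) :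
    Matrix.trace (X*(X*X)) = (3*b-3*b^2) * (X 2 2)^3 := by
  obtain ⟨h1,h2,h3,h4,h5⟩ := hX
  simp [Matrix.trace, Matrix.diag, Matrix.mul_apply, Fin.sum_univ_three, h1,h2,h3,h4,h5]
  ring

lemma nilpW (b : ℂ) (hb1 : b ≠ 1) (hb2 : b ≠ -1) {X : M3} (hX : X ∈ W b)
    (t2 : Matrix.trace (X*X) = 0) (t3 : Matrix.trace (X*(X*X)) = 0) : X 2 2 = 0 := by
  rw [tr2W b hX] at t2
  rw [tr3W b hX] at t3
  by_contra h
  have e2 : 2*b^2-2*b+2 = 0 := (mul_eq_zero.mp t2).resolve_right (pow_ne_zero 2 h)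
  have e3 : 3*b-3*b^2 = 0 := (mul_eq_zero.mp t3).resolve_right (pow_ne_zero 3 h)
  have hb : b * (3 - 3*b) = 0 := by linear_combination e3
  rcases mul_eq_zero.mp hb with h0 | h1'
  · rw [h0] at e2; norm_num at e2
  · have : b = 1 := by linear_combination (-1/3 : ℂ) * h1'
    rw [this] at e2; norm_num at e2

lemma final_alg (a b t : ℂ) (hb1 : b ≠ 1) (hb2 : b ≠ -1)
    (hE1 : a + 1 = -(b+1)*t)
    (hA2 : (2*b^2-2*b+2)*t^2 = 2*a^2-2*a+2)
    (hA3 : (3*b-3*b^2)*t^3 = 3*a^2-3*a) : a = b := by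
  have key1 : (a*b-1)*(a-b) = 0 := by
    linear_combination ((-1/3 : ℂ) + (1/3)*t + (1/3)*b + (-1/3)*b^2 + (1/3)*b^3*t + (-1/3)*a
        + (1/3)*a*b + (-1/3)*a*b^2) * hE1 + ((-1/6 : ℂ) + (-1/3)*b + (-1/6)*b^2) * hA2
  rcases mul_eq_zero.mp key1 with hab | hd
  · have hab' : a*b = 1 := by linear_combination hab
    have key2 : (b-1)*(b+1)^3 = 0 := by
      linear_combination ((1/6:ℂ)*b^2 + (1/2)*b^3 + (1/2)*b^4 + (1/6)*b^5) * hA3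
        + ((1:ℂ) + b + (-1)*b*t + (-2)*b^2 + (-5/2)*b^2*t + (1/2)*b^2*t^2 + (-3)*b^3
          + (-5/2)*b^3*t + (1/2)*b^3*t^2 + (-1)*b^4 + (-3/2)*b^4*t + (-1/2)*b^4*t^2
          + (-1/2)*b^5*t + (-1/2)*b^5*t^2) * hab'
        + ((-1:ℂ)*b + (-2)*b^2 + (1/2)*b^2*t + (-1)*b^3 + (1/2)*b^3*t + (-1/2)*b^3*t^2
          + (-1/2)*b^4*t + (-1/2)*b^4*t^2 + (-1/2)*b^5*t + (1/2)*b^5*t^2 + (1/2)*b^6*t^2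
          + (1/2)*a*b^2 + (3/2)*a*b^3 + (3/2)*a*b^4 + (1/2)*a*b^5) * hE1
    rcases mul_eq_zero.mp key2 with h | h
    · exact absurd (by linear_combination h) hb1
    · have : b + 1 = 0 := pow_eq_zero_iff (by norm_num) |>.mp h
      exact absurd (by linear_combination this) hb2
  · linear_combination hd

lemma conj_forward (a b : ℂ) (hb1 : b ≠ 1) (hb2 : b ≠ -1) (M : M3) (hdet : M.det = 1)
    (himg : (fun X => M * X * M⁻¹) '' (Submodule.span ℂ (Gset a) : Set M3)
      = (Submodule.span ℂ (Gset b) : Set M3)) : a = b := by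
  have hU : IsUnit M.det := by rw [hdet]; exact isUnit_one
  have hconj_mul : ∀ X Y : M3, (M*X*M⁻¹)*(M*Y*M⁻¹) = M*(X*Y)*M⁻¹ := by
    intro X Y
    simp only [Matrix.mul_assoc, Matrix.nonsing_inv_mul_cancel_left _ _ hU]
  have hcancel : ∀ X : M3, M⁻¹*(M*X*M⁻¹)*M = X := by
    intro X
    simp only [Matrix.mul_assoc, Matrix.nonsing_inv_mul_cancel_left _ _ hU,
      Matrix.nonsing_inv_mul _ hU, Matrix.mul_one]
  have htrace : ∀ X : M3, Matrix.trace (M*X*M⁻¹) = Matrix.trace X := by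
    intro X
    rw [Matrix.trace_mul_comm (M*X) M⁻¹, Matrix.nonsing_inv_mul_cancel_left _ _ hU]
  have hMem : ∀ X ∈ W a, M * X * M⁻¹ ∈ W b := by
    intro X hX
    have hX' : X ∈ (Submodule.span ℂ (Gset a) : Set M3) := by rw [span_Gset_eq]; exact hX
    have : M*X*M⁻¹ ∈ (Submodule.span ℂ (Gset b) : Set M3) := by
      rw [← himg]; exact ⟨X, hX', rfl⟩
    rwa [span_Gset_eq] at this
  have hgen : ∀ g ∈ Gset a, g ∈ W a := by
    intro g hg
    have := Submodule.subset_span (R := ℂ) hg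
    rwa [span_Gset_eq] at this
  set Da : M3 := Matrix.diagonal ![a, 1-a, -1] with hDa_def
  set u : M3 := M * Eij 0 1 * M⁻¹ with hu_def
  set v : M3 := M * Eij 1 2 * M⁻¹ with hv_def
  set P : M3 := M * Da * M⁻¹ with hP_def
  have hu : u ∈ W b := hMem _ (hgen _ (by simp [Gset]))
  have hv : v ∈ W b := hMem _ (hgen _ (by simp [Gset]))
  have hP : P ∈ W b := hMem _ (hgen _ (by simp [Gset, hDa_def]))
  have hu22 : u 2 2 = 0 := by
    apply nilpW b hb1 hb2 hu
    · rw [hu_def, hconj_mul, htrace]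
      simp [Eij, Matrix.trace, Matrix.diag, Matrix.mul_apply, Fin.sum_univ_three,
        Matrix.single]
    · rw [hu_def, hconj_mul, hconj_mul, htrace]
      simp [Eij, Matrix.trace, Matrix.diag, Matrix.mul_apply, Fin.sum_univ_three,
        Matrix.single]
  have hv22 : v 2 2 = 0 := by
    apply nilpW b hb1 hb2 hv
    · rw [hv_def, hconj_mul, htrace]
      simp [Eij, Matrix.trace, Matrix.diag, Matrix.mul_apply, Fin.sum_univ_three,
        Matrix.single]
    · rw [hv_def, hconj_mul, hconj_mul, htrace]
      simp [Eij, Matrix.trace, Matrix.diag, Matrix.mul_apply, Fin.sum_univ_three,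
        Matrix.single]
  obtain ⟨hu1,hu2,hu3,hu4,hu5⟩ := hu
  obtain ⟨hv1,hv2,hv3,hv4,hv5⟩ := hv
  simp only [hu22, mul_zero] at hu4 hu5
  simp only [hv22, mul_zero] at hv4 hv5
  have hprod : Eij 0 1 * Eij 1 2 = Eij 0 2 := by
    ext i j
    fin_cases i <;> fin_cases j <;>
      simp [Eij, Matrix.single, Matrix.mul_apply, Fin.sum_univ_three]
  have he : u * v = M * Eij 0 2 * M⁻¹ := by rw [hu_def, hv_def, hconj_mul, hprod]
  have hlam : u 0 1 * v 1 2 ≠ 0 := by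
    intro h0
    have huv0 : u * v = 0 := by
      ext i j
      fin_cases i <;> fin_cases j <;>
        simp [Matrix.mul_apply, Fin.sum_univ_three, hu1,hu2,hu3,hu4,hu5,hu22,
          hv1,hv2,hv3,hv4,hv5,hv22] <;>
        simp [mul_comm] at h0 ⊢ <;> tauto
    have h13 : Eij 0 2 = (0 : M3) := by
      have := hcancel (Eij 0 2)
      rw [← he, huv0] at this
      simp at this
      exact this.symm
    have := congrFun (congrFun h13 0) 2
    simp [Eij, Matrix.single] at this
  have hDaE13 : Da * Eij 0 2 - Eij 0 2 * Da = (a+1) • Eij 0 2 := by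
    ext i j
    fin_cases i <;> fin_cases j <;>
      simp [hDa_def, Eij, Matrix.single, Matrix.diagonal, Matrix.mul_apply,
        Fin.sum_univ_three, Matrix.sub_apply, Matrix.smul_apply] <;> ring
  have hcomm : P * (u*v) - (u*v) * P = (a+1) • (u*v) := by
    rw [he, hP_def, hconj_mul, hconj_mul, ← Matrix.sub_mul, ← Matrix.mul_sub, hDaE13,
      mul_smul_comm, smul_mul_assoc]
  have h02 := congrFun (congrFun hcomm 0) 2
  simp [Matrix.sub_apply, Matrix.smul_apply, Matrix.mul_apply, Fin.sum_univ_three,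
    hu1,hu2,hu3,hu4,hu5,hu22,hv1,hv2,hv3,hv4,hv5,hv22] at h02
  obtain ⟨hP1,hP2,hP3,hP4,hP5⟩ := hP
  have hE1 : a + 1 = -(b+1) * (P 2 2) := by
    apply mul_left_cancel₀ hlam
    linear_combination (-1 : ℂ) * h02 + (u 0 1 * v 1 2) * hP4
  have hA2 : (2*b^2-2*b+2) * (P 2 2)^2 = 2*a^2-2*a+2 := by
    rw [← tr2W b ⟨hP1,hP2,hP3,hP4,hP5⟩, hP_def, hconj_mul, htrace]
    simp [hDa_def, Matrix.diagonal_mul_diagonal, Matrix.trace_diagonal, Fin.sum_univ_three]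
    ring
  have hA3 : (3*b-3*b^2) * (P 2 2)^3 = 3*a^2-3*a := by
    rw [← tr3W b ⟨hP1,hP2,hP3,hP4,hP5⟩, hP_def, hconj_mul, hconj_mul, htrace]
    simp [hDa_def, Matrix.diagonal_mul_diagonal, Matrix.trace_diagonal, Fin.sum_univ_three]
    ring
  exact final_alg a b (P 2 2) hb1 hb2 hE1 hA2 hA3

theorem stmt_12 :
    (∀ a : ℂ, a ≠ 1 → a ≠ -1 →
      -- 𝔤_a is a 4-dimensional solvable Lie subalgebra of sl(3,ℂ)
      (LieSubalgebra.lieSpan ℂ M3 (Gset a) : Set M3) = (Submodule.span ℂ (Gset a) : Set M3) ∧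
      (Submodule.span ℂ (Gset a) : Set M3) ⊆ sl3 ∧
      Module.finrank ℂ (Submodule.span ℂ (Gset a)) = 4 ∧
      LieAlgebra.IsSolvable (LieSubalgebra.lieSpan ℂ M3 (Gset a))) ∧
    -- 𝔤_a and 𝔤_b are SL(3,ℂ)-conjugate iff a = b
    (∀ a b : ℂ, a ≠ 1 → a ≠ -1 → b ≠ 1 → b ≠ -1 →
      (SLConj (Submodule.span ℂ (Gset a) : Set M3) (Submodule.span ℂ (Gset b) : Set M3) ↔
        a = b)) := by
  constructor
  · intro a ha1 ha2
    refine ⟨?_, span_sub_sl3 a, finrank_span a, ?_⟩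
    · rw [lieSpan_eq, span_Gset_eq]; rfl
    · rw [lieSpan_eq]; exact solvK a
  · intro a b ha1 ha2 hb1 hb2
    constructor
    · rintro ⟨M, hM, himg⟩
      exact conj_forward a b hb1 hb2 M hM himg
    · rintro rfl
      refine ⟨1, by simp [SL3], ?_⟩
      simp [inv_one]
end
end
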